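/- For every graph E, the topology τ_{F_cf} generated by the cofinite filter on Path(E) is the coarsest inverse semigroup topology on G(E): every Hausdorff topology τ on G(E) making multiplication and inversion continuous satisfies τ_{F_cf} ⊆ τ. -/

import Mathlib

universe u

/-- A directed graph. -/
structure DiGraph : Type (u + 1) where
  V : Type u
  E : Type u
  s : E → V
  r : E → V

namespace DiGraph

variable (G : DiGraph.{u})

/-- A list of edges forms a valid path starting at vertex `v`. -/
def Valid (v : G.V) : List G.E → Prop
  | [] => True
  | e :: l => G.s e = v ∧ Valid (G.r e) l

/-- the endpoint of a list of edges starting at `v`. -/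
def dst (v : G.V) : List G.E → G.V
  | [] => v
  | e :: l => dst (G.r e) l

variable {G}

lemma dst_append (v : G.V) (l₁ l₂ : List G.E) :
    G.dst v (l₁ ++ l₂) = G.dst (G.dst v l₁) l₂ := by
  induction l₁ generalizing v with
  | nil => rfl
  | cons e t ih => simp [dst, ih]

lemma valid_append (v : G.V) (l₁ l₂ : List G.E) :
    G.Valid v (l₁ ++ l₂) ↔ G.Valid v l₁ ∧ G.Valid (G.dst v l₁) l₂ := by
  induction l₁ generalizing v with
  | nil => simp [Valid, dst]
  | cons e t ih => simp [Valid, dst, ih, and_assoc]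

variable (G) in
/-- A (finite, directed) path in `G`: a source vertex together with a
composable list of edges.  Paths of length zero are the vertices. -/
structure GPath : Type u where
  src : G.V
  edges : List G.E
  valid : G.Valid src edges

/-- The range (end vertex) of a path. -/
def GPath.rng (p : G.GPath) : G.V := G.dst p.src p.edges

/-- Concatenation of composable paths. -/
def GPath.comp (p q : G.GPath) (h : p.rng = q.src) : G.GPath :=
  ⟨p.src, p.edges ++ q.edges, by
    rw [valid_append]
    exact ⟨p.valid, by rw [show G.dst p.src p.edges = q.src from h]; exact q.valid⟩⟩

lemma GPath.comp_rng (p q : G.GPath) (h : p.rng = q.src) : (p.comp q h).rng = q.rng := by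
  show G.dst p.src (p.edges ++ q.edges) = _
  rw [dst_append, show G.dst p.src p.edges = q.src from h]; rfl

/-- If `p` is a prefix of the path `q`, the remaining path (so that
`q = p.comp (p.strip q _ _)`). -/
def GPath.strip (p q : G.GPath) (hs : p.src = q.src) (hp : p.edges <+: q.edges) : G.GPath :=
  ⟨p.rng, q.edges.drop p.edges.length, by
    obtain ⟨t, ht⟩ := hp
    have h1 : p.edges ++ q.edges.drop p.edges.length = q.edges := by
      rw [← ht, List.drop_left]
    have h2 : G.Valid p.src (p.edges ++ q.edges.drop p.edges.length) := by
      rw [h1, hs]; exact q.valid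
    exact ((valid_append _ _ _).mp h2).2⟩

lemma GPath.strip_rng (p q : G.GPath) (hs : p.src = q.src) (hp : p.edges <+: q.edges) :
    (p.strip q hs hp).rng = q.rng := by
  show G.dst p.rng (q.edges.drop p.edges.length) = G.dst q.src q.edges
  obtain ⟨t, ht⟩ := hp
  have h1 : p.edges ++ q.edges.drop p.edges.length = q.edges := by
    rw [← ht, List.drop_left]
  conv_rhs => rw [← hs, ← h1]
  rw [dst_append]; rfl

variable (G) in
/-- A nonzero element `a b⁻¹` of the graph inverse semigroup: a pair of
paths with the same range. -/
structure NZ : Type u where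
  a : G.GPath
  b : G.GPath
  h : a.rng = b.rng

/-- The graph inverse semigroup `G(E)` over a directed graph, in normal form:
the elements `a b⁻¹` with `r(a) = r(b)`, together with a zero element. -/
def GIS (G : DiGraph.{u}) : Type u := Option (NZ G)

instance : Zero (GIS G) := ⟨none⟩

open scoped Classical in
/-- The multiplication of the graph inverse semigroup:
`a b⁻¹ · c d⁻¹ = a c₁ d⁻¹` if `c = b c₁`, `a (d b₁)⁻¹` if `b = c b₁`, and `0` otherwise. -/
noncomputable instance : Mul (GIS G) :=
  ⟨fun x y =>
    match x, y with
    | none, _ => none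
    | some _, none => none
    | some ⟨a, b, hab⟩, some ⟨c, d, hcd⟩ =>
      if h : b.src = c.src ∧ b.edges <+: c.edges then
        some ⟨a.comp (b.strip c h.1 h.2) hab, d, by
          exact (GPath.comp_rng a (b.strip c h.1 h.2) hab).trans
            ((GPath.strip_rng b c h.1 h.2).trans hcd)⟩
      else if h' : c.src = b.src ∧ c.edges <+: b.edges then
        some ⟨a, d.comp (c.strip b h'.1 h'.2) hcd.symm, by
          exact hab.trans ((GPath.strip_rng c b h'.1 h'.2).symm.trans
            (GPath.comp_rng d (c.strip b h'.1 h'.2) hcd.symm).symm)⟩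
      else none⟩

/-- The nonzero element `a b⁻¹` of `G(E)` determined by a pair of paths
with the same range. -/
def GIS.nz (n : NZ G) : GIS G := some n

/-- The inversion of the graph inverse semigroup: `(u v⁻¹)⁻¹ = v u⁻¹`. -/
def GIS.inv : GIS G → GIS G
  | none => none
  | some ⟨a, b, h⟩ => some ⟨b, a, h.symm⟩

end DiGraph
namespace DiGraph

variable {G : DiGraph.{u}}

/-- membership predicate for the basic neighbourhoods of zero: all of
`a b⁻¹` with `a, b ∈ F`, together with `0`. -/
def inUF (F : Set G.GPath) : GIS G → Prop
  | none => True
  | some n => n.a ∈ F ∧ n.b ∈ F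

/-- The basic neighbourhood `U_F(0) = {a b⁻¹ : a, b ∈ F} ∪ {0}` of zero. -/
def UF (F : Set G.GPath) : Set (GIS G) := {x | inUF F x}

lemma inUF_mono {F₁ F₂ : Set G.GPath} (h : F₁ ⊆ F₂) :
    ∀ x : GIS G, inUF F₁ x → inUF F₂ x := by
  intro x hx
  cases x with
  | none => trivial
  | some n => exact ⟨h hx.1, h hx.2⟩

/-- The topology `τ_𝓕` on `G(E)` determined by a filter `𝓕` on `Path(E)`:
every nonzero element is isolated, and the sets `U_F(0)`, `F ∈ 𝓕`, form a
neighbourhood base at `0`. -/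
def tauF (𝓕 : Filter G.GPath) : TopologicalSpace (GIS G) where
  IsOpen U := (0 : GIS G) ∈ U → ∃ F ∈ 𝓕, UF F ⊆ U
  isOpen_univ := fun _ => ⟨Set.univ, Filter.univ_mem, Set.subset_univ _⟩
  isOpen_inter := fun U V hU hV h0 => by
    obtain ⟨F₁, hF₁, hs₁⟩ := hU h0.1
    obtain ⟨F₂, hF₂, hs₂⟩ := hV h0.2
    exact ⟨F₁ ∩ F₂, Filter.inter_mem hF₁ hF₂, fun x hx =>
      ⟨hs₁ (inUF_mono Set.inter_subset_left x hx),
       hs₂ (inUF_mono Set.inter_subset_right x hx)⟩⟩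
  isOpen_sUnion := fun S hS h0 => by
    obtain ⟨U, hU, h0U⟩ := h0
    obtain ⟨F, hF, hs⟩ := hS U hU h0U
    exact ⟨F, hF, hs.trans (Set.subset_sUnion_of_mem hU)⟩

/-- The prefix partial order on paths: `a ≤ b` iff `b` is a prefix of `a`. -/
def prefLE (a b : G.GPath) : Prop := b.src = a.src ∧ b.edges <+: a.edges

/-- An ideal of `(Path(E), ≤)`: a set `A` with `↓A = A`. -/
def IsIdeal (A : Set G.GPath) : Prop :=
  ∀ a b : G.GPath, prefLE a b → b ∈ A → a ∈ A

/-- A topological filter on `Path(E)`: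
(i) for `F ∈ 𝓕` and paths `a, b` with `r(a) = r(b)`, the set
`F \ {bk : k ∈ Path(E), ak ∉ F}` belongs to `𝓕`;
(ii) `𝓕` contains all cofinite subsets of `Path(E)`;
(iii) `𝓕` has a base consisting of ideals of `(Path(E), ≤)`. -/
def IsTopFilter (𝓕 : Filter G.GPath) : Prop :=
  (∀ F ∈ 𝓕, ∀ a b : G.GPath, a.rng = b.rng →
      F \ {p | ∃ (k : G.GPath) (h1 : b.rng = k.src) (h2 : a.rng = k.src),
        p = b.comp k h1 ∧ a.comp k h2 ∉ F} ∈ 𝓕) ∧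
  𝓕 ≤ Filter.cofinite ∧
  (∀ F ∈ 𝓕, ∃ I ∈ 𝓕, I ⊆ F ∧ IsIdeal I)

variable (G) in
/-- The filter `𝓕_ω` generated by the sets `U_n = {u ∈ Path(E) : |u| > n}`. -/
def Fomega : Filter G.GPath :=
  Filter.generate {S | ∃ n : ℕ, S = {u : G.GPath | n < u.edges.length}}

variable (G) in
/-- `U_n(0) = {u v⁻¹ : min{|u|,|v|} > n} ∪ {0}`. -/
def Un (n : ℕ) : Set (GIS G) := UF {u : G.GPath | n < u.edges.length}

end DiGraph

/-!
Every idempotent `c c⁻¹` is isolated in a Hausdorff inverse semigroup topology: otherwise,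
through `x ↦ x x⁻¹` and `x ↦ x⁻¹ x`, idempotents `d d⁻¹ ≠ c c⁻¹` accumulate at it. On a
neighbourhood `N` of `c c⁻¹` with `0 ∉ N N` any two of them have comparable paths, and as a path
has only finitely many prefixes, one such `d₀` properly extends `c` and a later `d` properly
extends `d₀`. Then `d₀ d₀⁻¹ · d d⁻¹ = d d⁻¹` is close to `c c⁻¹`, while by continuity it is close
to `d₀ d₀⁻¹ · c c⁻¹ = d₀ d₀⁻¹ ≠ c c⁻¹`, contradicting the Hausdorff property. Consequently `a b⁻¹`
is isolated, being the only `x` with `x x⁻¹ = a a⁻¹` and `x⁻¹ x = b b⁻¹`. At `0`, for cofinite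
`F`, avoiding the finitely many closed sets `{x | x x⁻¹ = p p⁻¹}`, `{x | x⁻¹ x = p p⁻¹}` with
`p ∉ F` leaves a neighbourhood of `0` inside `U_F(0)`.
-/

open Filter Topology Set

namespace DiGraph

variable {G : DiGraph.{u}}

attribute [ext] GPath NZ

lemma prefLE_antisymm {a b : G.GPath} (hab : prefLE a b) (hba : prefLE b a) : a = b :=
  GPath.ext hba.1 (hba.2.eq_of_length (hba.2.length_le.antisymm hab.2.length_le))

lemma finite_setOf_prefLE (a : G.GPath) : {c | prefLE a c}.Finite := by
  refine Set.Finite.of_finite_image (f := GPath.edges) ?_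
    fun c hc d hd h => GPath.ext (hc.1.trans hd.1.symm) h
  refine a.edges.inits.finite_toSet.subset ?_
  rintro _ ⟨c, hc, rfl⟩
  exact (List.mem_inits _ _).2 hc.2

instance : Inv (GIS G) := ⟨GIS.inv⟩

namespace GIS

/-- The idempotent `c c⁻¹`. -/
def idem (c : G.GPath) : GIS G := nz ⟨c, c, rfl⟩

lemma nz_injective : Function.Injective (nz : NZ G → GIS G) := Option.some_injective _

lemma nz_ne_zero (m : NZ G) : nz m ≠ 0 := Option.some_ne_none m

lemma idem_injective : Function.Injective (idem : G.GPath → GIS G) :=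
  fun _ _ h => congrArg NZ.a (nz_injective h)

lemma idem_ne_zero (c : G.GPath) : idem c ≠ 0 := nz_ne_zero _

lemma eq_zero_or_eq_nz (x : GIS G) : x = 0 ∨ ∃ m, x = nz m := by
  cases x with
  | none => exact .inl rfl
  | some m => exact .inr ⟨m, rfl⟩

lemma nz_inv (m : NZ G) : (nz m)⁻¹ = nz ⟨m.b, m.a, m.h.symm⟩ := rfl

open scoped Classical in
lemma nz_mul_nz (m n : NZ G) : nz m * nz n =
    if h : prefLE n.a m.b then
      nz ⟨m.a.comp (m.b.strip n.a h.1 h.2) m.h, n.b,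
        (GPath.comp_rng _ _ _).trans ((GPath.strip_rng _ _ _ _).trans n.h)⟩
    else if h' : prefLE m.b n.a then
      nz ⟨m.a, n.b.comp (n.a.strip m.b h'.1 h'.2) n.h.symm,
        m.h.trans ((GPath.strip_rng _ _ _ _).symm.trans (GPath.comp_rng _ _ _).symm)⟩
    else 0 := by
  obtain ⟨a, b, hab⟩ := m
  obtain ⟨c, d, hcd⟩ := n
  exact dite_congr rfl (fun _ => rfl) fun _ => dite_congr rfl (fun _ => rfl) fun _ => rfl

lemma nz_mul_inv (m : NZ G) : nz m * (nz m)⁻¹ = idem m.a := by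
  rw [nz_inv, nz_mul_nz, dif_pos ⟨rfl, List.prefix_rfl⟩]
  congr 1
  refine NZ.ext (GPath.ext rfl ?_) rfl
  simp [GPath.comp, GPath.strip]

lemma inv_mul_nz (m : NZ G) : (nz m)⁻¹ * nz m = idem m.b :=
  nz_mul_inv ⟨m.b, m.a, m.h.symm⟩

lemma idem_mul_idem_eq_right {c d : G.GPath} (h : prefLE d c) : idem c * idem d = idem d := by
  rw [idem, idem, nz_mul_nz, dif_pos h]
  congr 1
  exact NZ.ext (GPath.ext h.1 (List.prefix_iff_eq_append.1 h.2)) rfl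

lemma idem_mul_idem_eq_left {c d : G.GPath} (h : prefLE c d) : idem c * idem d = idem c := by
  by_cases h' : prefLE d c
  · rw [idem_mul_idem_eq_right h', prefLE_antisymm h h']
  rw [idem, idem, nz_mul_nz, dif_neg h', dif_pos h]
  congr 1
  exact NZ.ext rfl (GPath.ext h.1 (List.prefix_iff_eq_append.1 h.2))

lemma prefLE_or_prefLE_of_idem_mul_idem_ne_zero {c d : G.GPath} (h : idem c * idem d ≠ 0) :
    prefLE d c ∨ prefLE c d := by
  by_contra! h'
  rw [idem, idem, nz_mul_nz, dif_neg h'.1, dif_neg h'.2] at h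
  exact h rfl

@[simp] lemma idem_mul_inv (a : G.GPath) : idem a * (idem a)⁻¹ = idem a := nz_mul_inv _

@[simp] lemma idem_inv_mul (a : G.GPath) : (idem a)⁻¹ * idem a = idem a := inv_mul_nz _

lemma prefLE_of_idem_mul_idem_ne_zero {a c : G.GPath} (h : idem a * idem c ≠ 0)
    (hc : idem c ∉ idem '' {d | prefLE a d}) : prefLE c a :=
  (prefLE_or_prefLE_of_idem_mul_idem_ne_zero h).resolve_right fun h' => hc ⟨c, h', rfl⟩

end GIS

lemma exists_mem_nhds_forall_mul_ne {M : Type*} [Mul M] [TopologicalSpace M] [ContinuousMul M]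
    [T1Space M] {x z : M} (h : x * x ≠ z) : ∃ N ∈ 𝓝 x, ∀ y ∈ N, ∀ y' ∈ N, y * y' ≠ z := by
  have : ∀ᶠ q in 𝓝 x ×ˢ 𝓝 x, q.1 * q.2 ≠ z := by
    rw [← nhds_prod_eq]
    exact continuous_mul.continuousAt.eventually_ne h
  exact eventually_prod_self_iff.1 this

section Topology

open GIS

variable [TopologicalSpace (GIS G)] [ContinuousMul (GIS G)] [ContinuousInv (GIS G)]

lemma continuous_mul_inv_self : Continuous fun x : GIS G => x * x⁻¹ := by fun_prop

lemma continuous_inv_mul_self : Continuous fun x : GIS G => x⁻¹ * x := by fun_prop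

lemma exists_ne_idem_mem_of_mem_nhdsNE [T1Space (GIS G)] {a : G.GPath}
    [(𝓝[≠] (idem a)).NeBot] {U : Set (GIS G)} (hU : U ∈ 𝓝[≠] (idem a)) : ∃ c ≠ a, idem c ∈ U := by
  obtain ⟨W, hW, hWU⟩ := mem_nhdsWithin_iff_exists_mem_nhds_inter.1 hU
  have hx : ∀ᶠ x in 𝓝 (idem a), x * x⁻¹ ∈ W ∧ x⁻¹ * x ∈ W ∧ x ≠ 0 :=
    ((continuous_mul_inv_self.tendsto' _ _ (idem_mul_inv a)).eventually_mem hW).and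
      (((continuous_inv_mul_self.tendsto' _ _ (idem_inv_mul a)).eventually_mem hW).and
        (eventually_ne_nhds (idem_ne_zero a)))
  obtain ⟨x, ⟨hxa, hxb, hx0⟩, hxe : x ≠ idem a⟩ :=
    ((hx.filter_mono nhdsWithin_le_nhds).and
      (eventually_mem_nhdsWithin (s := {idem a}ᶜ))).exists
  obtain ⟨m, rfl⟩ := (eq_zero_or_eq_nz x).resolve_left hx0
  rw [nz_mul_inv] at hxa
  rw [inv_mul_nz] at hxb
  by_cases hma : m.a = a
  · have hmb : m.b ≠ a := fun hmb => hxe (congrArg nz (NZ.ext hma hmb))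
    exact ⟨m.b, hmb, hWU ⟨hxb, idem_injective.ne hmb⟩⟩
  · exact ⟨m.a, hma, hWU ⟨hxa, idem_injective.ne hma⟩⟩

lemma isOpen_singleton_idem [T2Space (GIS G)] (a : G.GPath) : IsOpen {idem a} := by
  by_contra hopen
  have : (𝓝[≠] (idem a)).NeBot := ⟨by rwa [ne_eq, ← isOpen_singleton_iff_punctured_nhds]⟩
  have hfin (c : G.GPath) : (idem '' {d | prefLE c d})ᶜ ∈ 𝓝[≠] (idem a) :=
    nhdsNE_le_cofinite _ ((finite_setOf_prefLE c).image idem).compl_mem_cofinite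
  obtain ⟨N, hN, hNmul⟩ := exists_mem_nhds_forall_mul_ne (x := idem a) (z := 0)
    (by rw [idem_mul_idem_eq_right ⟨rfl, List.prefix_rfl⟩]; exact idem_ne_zero a)
  obtain ⟨c₀, hc₀a, hc₀N, hc₀⟩ :=
    exists_ne_idem_mem_of_mem_nhdsNE (inter_mem (mem_nhdsWithin_of_mem_nhds hN) (hfin a))
  have hac₀ : prefLE c₀ a :=
    prefLE_of_idem_mul_idem_ne_zero (hNmul _ (mem_of_mem_nhds hN) _ hc₀N) hc₀
  obtain ⟨A, B, hA, hB, hc₀A, haB, hAB⟩ := t2_separation (idem_injective.ne hc₀a)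
  have hA' : (idem c₀ * ·) ⁻¹' A ∈ 𝓝 (idem a) := by
    refine (continuous_const_mul _).continuousAt.preimage_mem_nhds ?_
    rw [idem_mul_idem_eq_left hac₀]
    exact hA.mem_nhds hc₀A
  obtain ⟨c, -, ⟨⟨hcN, hcA⟩, hcB⟩, hc⟩ := exists_ne_idem_mem_of_mem_nhdsNE
    (inter_mem (mem_nhdsWithin_of_mem_nhds (inter_mem (inter_mem hN hA') (hB.mem_nhds haB)))
      (hfin c₀))
  have hc₀c : prefLE c c₀ := prefLE_of_idem_mul_idem_ne_zero (hNmul _ hc₀N _ hcN) hc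
  rw [mem_preimage, idem_mul_idem_eq_right hc₀c] at hcA
  exact disjoint_left.1 hAB hcA hcB

lemma isOpen_singleton_nz [T2Space (GIS G)] (m : NZ G) : IsOpen {nz m} := by
  convert ((isOpen_singleton_idem m.a).preimage continuous_mul_inv_self).inter
    ((isOpen_singleton_idem m.b).preimage continuous_inv_mul_self) using 1
  ext x
  constructor
  · rintro rfl
    exact ⟨nz_mul_inv m, inv_mul_nz m⟩
  · rintro ⟨ha, hb⟩
    obtain ⟨k, rfl⟩ :=
      (eq_zero_or_eq_nz x).resolve_left fun hx => idem_ne_zero m.a (hx ▸ ha).symm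
    rw [mem_preimage, mem_singleton_iff, nz_mul_inv] at ha
    rw [mem_preimage, mem_singleton_iff, inv_mul_nz] at hb
    exact congrArg nz (NZ.ext (idem_injective ha) (idem_injective hb))

lemma UF_mem_nhds_zero [T1Space (GIS G)] {F : Set G.GPath} (hF : F ∈ cofinite) :
    UF F ∈ 𝓝 (0 : GIS G) := by
  have h : ∀ᶠ x in 𝓝 (0 : GIS G), ∀ p ∈ Fᶜ, x * x⁻¹ ≠ idem p ∧ x⁻¹ * x ≠ idem p :=
    (eventually_all_finite hF).2 fun p _ =>
      (continuous_mul_inv_self.continuousAt.eventually_ne (idem_ne_zero p).symm).and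
        (continuous_inv_mul_self.continuousAt.eventually_ne (idem_ne_zero p).symm)
  filter_upwards [h] with x hx
  obtain rfl | ⟨m, rfl⟩ := eq_zero_or_eq_nz x
  · trivial
  · exact ⟨not_not.1 fun ha => (hx m.a ha).1 (nz_mul_inv m),
      not_not.1 fun hb => (hx m.b hb).2 (inv_mul_nz m)⟩

end Topology

lemma le_tauF {t : TopologicalSpace (GIS G)} {𝓕 : Filter G.GPath}
    (hnz : ∀ m : NZ G, IsOpen[t] {GIS.nz m}) (hzero : ∀ F ∈ 𝓕, UF F ∈ @nhds _ t 0) :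
    t ≤ tauF 𝓕 := by
  rw [TopologicalSpace.le_def]
  intro U hU
  rw [@isOpen_iff_mem_nhds _ t]
  intro x hx
  obtain rfl | ⟨m, rfl⟩ := GIS.eq_zero_or_eq_nz x
  · obtain ⟨F, hF, hFU⟩ := hU hx
    exact mem_of_superset (hzero F hF) hFU
  · exact mem_of_superset ((hnz m).mem_nhds rfl) (singleton_subset_iff.2 hx)

end DiGraph

open DiGraph in
/-- For every graph `E`, the topology `τ_{𝓕_cf}` generated by the cofinite
filter on `Path(E)` is the coarsest inverse semigroup topology on `G(E)`:
every Hausdorff topology `τ` on `G(E)` making multiplication and inversion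
continuous satisfies `τ_{𝓕_cf} ⊆ τ` (i.e. `τ` is finer). -/
theorem tau_cofinite_coarsest (G : DiGraph.{u}) (τ : TopologicalSpace (GIS G))
    (hT2 : @T2Space (GIS G) τ)
    (hmul : @Continuous (GIS G × GIS G) (GIS G)
      (@instTopologicalSpaceProd _ _ τ τ) τ (fun p => p.1 * p.2))
    (hinv : @Continuous (GIS G) (GIS G) τ τ GIS.inv) :
    τ ≤ tauF (Filter.cofinite : Filter G.GPath) := by
  let _ := τ
  have : ContinuousMul (GIS G) := ⟨hmul⟩
  have : ContinuousInv (GIS G) := ⟨hinv⟩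
  exact le_tauF isOpen_singleton_nz fun _ => UF_mem_nhds_zero
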